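/- arXiv:1910.04231 — 6 statements merged into one kernel-verified Lean document; each statement's English description precedes it below -/
import Mathlib

section
/- Let q > 1 be a real number. For every real number t with |t| < q, the family (1 - q^{-k} t)^{-1}, indexed by integers k ≥ 1, is multipliable, the series ∑_{i=1}^∞ (1/(q^i - 1)) · t^i / i converges, and exp( ∑_{i=1}^∞ (1/(q^i - 1)) · t^i / i ) = ∏_{k=1}^∞ (1 - q^{-k} t)^{-1}. (This is the product formula for the zeta function of the classifying stack BG_m over F_q, whose groupoid point count over F_{q^i} is 1/(q^i - 1).) -/
/-!
Put `a k = q^{-(k+1)} t`, so that `|a k| ≤ (|t|/q) q^{-k}` with `|t|/q < 1`. The double series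
`∑_{k,i} a_k^{i+1}/(i+1)` then converges absolutely. Summing first over `i` gives
`∑_k log (1 - a_k)⁻¹`, whose exponential is the Euler product; summing first over `k` gives the
geometric series `∑_k q^{-(k+1)(i+1)} = 1/(q^{i+1} - 1)`, i.e. the point-count series.
-/

open Real

section LogSeries

variable {a : ℕ → ℝ} {ρ r : ℝ}

lemma abs_lt_one_of_abs_le_geometric (hρ : ρ < 1) (hr0 : 0 ≤ r) (hr : r ≤ 1)
    (ha : ∀ k, |a k| ≤ ρ * r ^ k) (k : ℕ) : |a k| < 1 := by
  have hρ0 : 0 ≤ ρ := (abs_nonneg _).trans ((ha 0).trans_eq (by simp))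
  calc |a k| ≤ ρ * r ^ k := ha k
    _ ≤ ρ * 1 := by gcongr; exact pow_le_one₀ hr0 hr
    _ < 1 := by simpa using hρ

lemma summable_pow_div_of_abs_le_geometric (hρ : ρ < 1) (hr0 : 0 ≤ r) (hr : r < 1)
    (ha : ∀ k, |a k| ≤ ρ * r ^ k) :
    Summable (fun p : ℕ × ℕ => a p.1 ^ (p.2 + 1) / (p.2 + 1)) := by
  have hρ0 : 0 ≤ ρ := (abs_nonneg _).trans ((ha 0).trans_eq (by simp))
  have hgeom : Summable (fun p : ℕ × ℕ => r ^ p.1 * ρ ^ p.2) :=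
    (summable_geometric_of_lt_one hr0 hr).mul_of_nonneg (summable_geometric_of_lt_one hρ0 hρ)
      (fun _ => by positivity) (fun _ => by positivity)
  refine Summable.of_norm_bounded hgeom fun ⟨k, i⟩ => ?_
  calc ‖a k ^ (i + 1) / (i + 1)‖ ≤ |a k| ^ (i + 1) := by
        rw [norm_div, norm_pow, norm_eq_abs, norm_of_nonneg (by positivity)]
        exact div_le_self (by positivity) (by linarith [(i.cast_nonneg : (0 : ℝ) ≤ i)])
    _ ≤ (ρ * r ^ k) ^ (i + 1) := pow_le_pow_left₀ (abs_nonneg _) (ha k) _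
    _ = ρ ^ i * ρ * (r ^ k * (r ^ k) ^ i) := by ring
    _ ≤ ρ ^ i * 1 * (r ^ k * 1) := by
        gcongr
        exact pow_le_one₀ (by positivity) (pow_le_one₀ hr0 hr.le)
    _ = r ^ k * ρ ^ i := by ring

lemma hasProd_inv_one_sub_exp_tsum
    (hF : Summable (fun p : ℕ × ℕ => a p.1 ^ (p.2 + 1) / (p.2 + 1))) (ha : ∀ k, |a k| < 1) :
    HasProd (fun k => (1 - a k)⁻¹) (exp (∑' p : ℕ × ℕ, a p.1 ^ (p.2 + 1) / (p.2 + 1))) := by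
  have hlog : HasSum (fun k => log (1 - a k)⁻¹) (∑' p : ℕ × ℕ, a p.1 ^ (p.2 + 1) / (p.2 + 1)) :=
    hF.hasSum.prod_fiberwise fun k => by
      simpa [log_inv] using hasSum_pow_div_log_of_abs_lt_one (ha k)
  refine hlog.rexp.congr_fun fun k => (exp_log (inv_pos.mpr (sub_pos.mpr ?_))).symm
  exact (le_abs_self _).trans_lt (ha k)

end LogSeries

lemma hasSum_inv_pow_succ {q : ℝ} (hq : 1 < q) :
    HasSum (fun k : ℕ => (q ^ (k + 1))⁻¹) (q - 1)⁻¹ := by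
  have hq0 : 0 < q := zero_lt_one.trans hq
  have hgeom :=
    (hasSum_geometric_of_lt_one (inv_nonneg.mpr hq0.le) (inv_lt_one_of_one_lt₀ hq)).mul_left q⁻¹
  rw [show (q - 1)⁻¹ = q⁻¹ * (1 - q⁻¹)⁻¹ by field_simp [(sub_pos.mpr hq).ne', hq0.ne']]
  simpa only [pow_succ', mul_inv, inv_pow] using hgeom

lemma hasSum_inv_pow_succ_mul_pow_div {q : ℝ} (hq : 1 < q) (t : ℝ) {n : ℕ} (hn : n ≠ 0) :
    HasSum (fun k : ℕ => ((q ^ (k + 1))⁻¹ * t) ^ n / n) (1 / (q ^ n - 1) * t ^ n / n) := by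
  have hterm (k : ℕ) : ((q ^ (k + 1))⁻¹ * t) ^ n / n = ((q ^ n) ^ (k + 1))⁻¹ * (t ^ n / n) := by
    rw [mul_pow, inv_pow, ← pow_mul, ← pow_mul, mul_comm n]; ring
  rw [funext hterm, show 1 / (q ^ n - 1) * t ^ n / n = (q ^ n - 1)⁻¹ * (t ^ n / n) by ring]
  exact (hasSum_inv_pow_succ (one_lt_pow₀ hq hn)).mul_right _

/-- Product formula for the zeta function of the classifying stack `B𝔾ₘ` over `𝔽_q`:
for a real `q > 1` and real `t` with `|t| < q`, the family `(1 - q^{-k} t)⁻¹` for `k ≥ 1`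
is multipliable, the series `∑_{i≥1} (1/(q^i - 1)) tⁱ/i` converges, and
`exp(∑_{i≥1} (1/(q^i-1)) tⁱ/i) = ∏_{k≥1} (1 - q^{-k} t)⁻¹`. -/
theorem zeta_BGm_product_formula (q : ℝ) (hq : 1 < q) (t : ℝ) (ht : |t| < q) :
    Multipliable (fun k : ℕ => (1 - q ^ (-((k : ℤ) + 1)) * t)⁻¹) ∧
    Summable (fun i : ℕ => (1 / (q ^ (i + 1) - 1)) * t ^ (i + 1) / (i + 1)) ∧
    Real.exp (∑' i : ℕ, (1 / (q ^ (i + 1) - 1)) * t ^ (i + 1) / (i + 1)) =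
      ∏' k : ℕ, (1 - q ^ (-((k : ℤ) + 1)) * t)⁻¹ := by
  have hq0 : 0 < q := zero_lt_one.trans hq
  have hfactor (k : ℕ) : q ^ (-((k : ℤ) + 1)) * t = (q ^ (k + 1))⁻¹ * t := by
    rw [← zpow_natCast, ← zpow_neg]; push_cast; rfl
  have hbound (k : ℕ) : |(q ^ (k + 1))⁻¹ * t| ≤ |t| / q * q⁻¹ ^ k := by
    rw [abs_mul, abs_inv, abs_of_pos (pow_pos hq0 _), pow_succ, mul_inv, inv_pow]
    exact le_of_eq (by ring)
  have hρ : |t| / q < 1 := (div_lt_one hq0).mpr ht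
  have hr0 : 0 ≤ q⁻¹ := inv_nonneg.mpr hq0.le
  have hr : q⁻¹ < 1 := inv_lt_one_of_one_lt₀ hq
  have hF := summable_pow_div_of_abs_le_geometric hρ hr0 hr hbound
  have hprod := hasProd_inv_one_sub_exp_tsum (a := fun k => (q ^ (k + 1))⁻¹ * t) hF
    (abs_lt_one_of_abs_le_geometric hρ hr0 hr.le hbound)
  have hsum : HasSum (fun i : ℕ => (1 / (q ^ (i + 1) - 1)) * t ^ (i + 1) / (i + 1)) _ :=
    ((Equiv.prodComm ℕ ℕ).hasSum_iff.mpr hF.hasSum).prod_fiberwise fun i => by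
      simpa using hasSum_inv_pow_succ_mul_pow_div hq t i.succ_ne_zero
  simp only [hfactor]
  exact ⟨hprod.multipliable, hsum.summable, by rw [hsum.tsum_eq, hprod.tprod_eq]⟩
end

section
/- Let q > 1 be a real number. For every real number t with |t| < 1, exp( ∑_{i=1}^∞ (q t)^i / (i (q^i - 1)) ) = (1 - t)^{-1} · exp( ∑_{i=1}^∞ t^i / (i (q^i - 1)) ). (This is the functional equation ζ_{BG_m}(qt) = (1-t)^{-1} ζ_{BG_m}(t) for the zeta function of the classifying stack BG_m.) -/
/-!
Since `(q t) ^ n = t ^ n + (q ^ n - 1) t ^ n`, the `n`-th term of the series at `q t` is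
`t ^ n / n` plus the `n`-th term of the series at `t`. The first parts sum to `-log (1 - t)`,
which exponentiates to the factor `(1 - t)⁻¹`.
-/

open Real

theorem mul_pow_div_mul_pow_sub_one {K : Type*} [Field K] {q : K} {n : ℕ} (hq : q ^ n ≠ 1)
    (c t : K) :
    (q * t) ^ n / (c * (q ^ n - 1)) = t ^ n / c + t ^ n / (c * (q ^ n - 1)) := by
  have hq' : q ^ n - 1 ≠ 0 := sub_ne_zero.mpr hq
  rcases eq_or_ne c 0 with rfl | hc
  · simp
  · field_simp
    ring

/-- The `i`-th term of `log ζ_{B𝔾ₘ}(t) = ∑_{n ≥ 1} tⁿ / (n (qⁿ - 1))`, indexed by `n = i + 1`. -/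
noncomputable def logZetaBGmTerm (q t : ℝ) (i : ℕ) : ℝ :=
  t ^ (i + 1) / ((i + 1) * (q ^ (i + 1) - 1))

theorem summable_logZetaBGmTerm {q t : ℝ} (hq : 1 < q) (ht : |t| < 1) :
    Summable (logZetaBGmTerm q t) := by
  refine Summable.of_norm_bounded
    ((summable_geometric_of_lt_one (abs_nonneg t) ht).mul_left (|t| / (q - 1))) fun i => ?_
  have hq_pow : q - 1 ≤ q ^ (i + 1) - 1 :=
    sub_le_sub_right (le_self_pow₀ hq.le (Nat.succ_ne_zero i)) 1
  have hden : q - 1 ≤ (i + 1) * (q ^ (i + 1) - 1) :=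
    hq_pow.trans (le_mul_of_one_le_left (by linarith) (by simp))
  rw [logZetaBGmTerm, norm_div, norm_pow, norm_eq_abs, div_mul_eq_mul_div, ← pow_succ']
  exact div_le_div_of_nonneg_left (by positivity) (by linarith) (hden.trans (le_norm_self _))

theorem hasSum_logZetaBGmTerm_mul {q t : ℝ} (hq : 1 < q) (ht : |t| < 1) :
    HasSum (logZetaBGmTerm q (q * t)) (-log (1 - t) + ∑' i, logZetaBGmTerm q t i) := by
  have hsplit : logZetaBGmTerm q (q * t) =
      fun i => t ^ (i + 1) / (i + 1) + logZetaBGmTerm q t i := by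
    ext i
    exact mul_pow_div_mul_pow_sub_one (one_lt_pow₀ hq (Nat.succ_ne_zero i)).ne' _ t
  rw [hsplit]
  exact (hasSum_pow_div_log_of_abs_lt_one ht).add (summable_logZetaBGmTerm hq ht).hasSum

/-- Functional equation `ζ_{B𝔾ₘ}(qt) = (1-t)⁻¹ ζ_{B𝔾ₘ}(t)` for the zeta function of the
classifying stack `B𝔾ₘ`, where `ζ_{B𝔾ₘ}(t) = exp(∑_{i≥1} tⁱ/(i(qⁱ-1)))`. -/
theorem zeta_BGm_functional_equation (q : ℝ) (hq : 1 < q) (t : ℝ) (ht : |t| < 1) :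
    Real.exp (∑' i : ℕ, (q * t) ^ (i + 1) / ((i + 1) * (q ^ (i + 1) - 1))) =
      (1 - t)⁻¹ * Real.exp (∑' i : ℕ, t ^ (i + 1) / ((i + 1) * (q ^ (i + 1) - 1))) := by
  have h1t : 0 < 1 - t := by linarith [(abs_lt.mp ht).2]
  change exp (∑' i, logZetaBGmTerm q (q * t) i) = (1 - t)⁻¹ * exp (∑' i, logZetaBGmTerm q t i)
  rw [(hasSum_logZetaBGmTerm_mul hq ht).tsum_eq, exp_add, exp_neg, exp_log h1t]
end

section
/- Let q > 1 be a real number, let r ≥ 1 be a natural number, let d_1, …, d_r be natural numbers with each d_j ≥ 1, and let D be a natural number. For every real number t with |t| < q^D: the family (1 - q^{-(k_1 d_1 + ⋯ + k_r d_r + D - (d_1 + ⋯ + d_r))} t)^{-1}, indexed by tuples (k_1, …, k_r) of positive integers, is multipliable, and exp( ∑_{i=1}^∞ (t^i / i) · q^{-iD} ∏_{j=1}^r (1 - q^{-i d_j})^{-1} ) = ∏_{k_1=1}^∞ ⋯ ∏_{k_r=1}^∞ (1 - q^{-(k_1 d_1 + ⋯ + k_r d_r + D - (d_1 + ⋯ +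 d_r))} t)^{-1}. (This is the zeta function formula ζ_{BG}(t) = ∏_{k_1,…,k_r ≥ 1} (1 - q^{-(∑_j k_j d_j + dim G - ∑_j d_j)} t)^{-1} for a Chevalley group scheme G of rank r, dimension D, with Weyl group invariant degrees d_1, …, d_r.) -/
/-!
Write `x = q⁻¹`, `c = q⁻ᴰ t` and `n(k) = ∑ⱼ kⱼ dⱼ`; the factor indexed by `k` is then
`(1 - c xⁿ⁽ᵏ⁾)⁻¹`. Its logarithm is `∑ᵢ (c xⁿ⁽ᵏ⁾)ⁱ⁺¹ / (i + 1)`, and since `|c| < 1` the double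
series over `(i, k)` converges absolutely, so the sums may be swapped. For fixed `i` the sum over
tuples `k` is a product of geometric series, `∑ₖ (xⁱ⁺¹)ⁿ⁽ᵏ⁾ = ∏ⱼ (1 - x⁽ⁱ⁺¹⁾ᵈʲ)⁻¹`, which is
`q^{(i+1)D} · #BG(𝔽_{q^{i+1}})`. Exponentiating the resulting series of logarithms gives the
product.
-/

open Finset Real

theorem hasSum_prod_pi_of_nonneg {β : Type*} {n : ℕ} {f : Fin n → β → ℝ} {s : Fin n → ℝ}
    (hf : ∀ j, HasSum (f j) (s j)) (hf0 : ∀ j b, 0 ≤ f j b) :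
    HasSum (fun k : Fin n → β => ∏ j, f j (k j)) (∏ j, s j) := by
  induction n with
  | zero => simp
  | succ n ih =>
    let g : (Fin n → β) → ℝ := fun k => ∏ j : Fin n, f j.succ (k j)
    have htail : HasSum g (∏ j : Fin n, s j.succ) := ih (fun j => hf j.succ) (fun j => hf0 j.succ)
    have hsplit : HasSum (fun p : β × (Fin n → β) => f 0 p.1 * g p.2)
        (s 0 * ∏ j : Fin n, s j.succ) :=
      (hf 0).mul (g := g) htail <| Summable.mul_of_nonneg (f := f 0) (g := g) (hf 0).summable
        htail.summable (hf0 0) fun k => prod_nonneg fun j _ => hf0 j.succ (k j)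
    rw [Fin.prod_univ_succ]
    refine (Fin.consEquiv fun _ => β).hasSum_iff.mp ?_
    convert hsplit using 2 with p
    simp [Fin.prod_univ_succ, g]

theorem hasSum_pow_sum_mul {n : ℕ} {d : Fin n → ℕ} (hd : ∀ j, 1 ≤ d j) {x : ℝ}
    (hx0 : 0 ≤ x) (hx1 : x < 1) :
    HasSum (fun k : Fin n → ℕ => x ^ ∑ j, k j * d j) (∏ j, (1 - x ^ d j)⁻¹) := by
  have hgeom (j : Fin n) : HasSum (fun m : ℕ => (x ^ d j) ^ m) (1 - x ^ d j)⁻¹ :=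
    hasSum_geometric_of_lt_one (by positivity) (pow_lt_one₀ hx0 hx1 (by have := hd j; omega))
  convert hasSum_prod_pi_of_nonneg hgeom (fun j m => by positivity) using 2 with k
  rw [← prod_pow_eq_pow_sum]
  exact prod_congr rfl fun j _ => by rw [← pow_mul, mul_comm]

theorem hasProd_inv_one_sub_mul_pow {β : Type*} {n : β → ℕ} {F : ℝ → ℝ}
    (hF : ∀ y, 0 ≤ y → y < 1 → HasSum (fun k => y ^ n k) (F y)) {x c : ℝ}
    (hx0 : 0 ≤ x) (hx1 : x < 1) (hc : |c| < 1) :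
    HasProd (fun k => (1 - c * x ^ n k)⁻¹)
      (exp (∑' i : ℕ, c ^ (i + 1) / (i + 1) * F (x ^ (i + 1)))) := by
  have hpow_le (k : β) : x ^ n k ≤ 1 := pow_le_one₀ hx0 hx1.le
  have habs (k : β) : |c * x ^ n k| < 1 := by
    rw [abs_mul, abs_of_nonneg (pow_nonneg hx0 _)]
    exact (mul_le_of_le_one_right (abs_nonneg c) (hpow_le k)).trans_lt hc
  set g : ℕ × β → ℝ := fun p => (c * x ^ n p.2) ^ (p.1 + 1) / ((p.1 : ℝ) + 1)
  have hg : Summable g := by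
    have hgeom : Summable fun i : ℕ => |c| ^ (i + 1) :=
      (summable_geometric_of_lt_one (abs_nonneg c) hc).comp_injective (add_left_injective 1)
    refine Summable.of_norm_bounded (Summable.mul_of_nonneg (f := fun i : ℕ => |c| ^ (i + 1))
      (g := fun k => x ^ n k) hgeom (hF x hx0 hx1).summable (fun i => by positivity)
      fun k => by positivity) fun ⟨i, k⟩ => ?_
    calc ‖g (i, k)‖ ≤ |c| ^ (i + 1) * (x ^ n k) ^ (i + 1) := by
          rw [Real.norm_eq_abs, abs_div, abs_pow, abs_mul, abs_of_nonneg (pow_nonneg hx0 _),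
            mul_pow, abs_of_pos (by positivity : (0 : ℝ) < i + 1)]
          exact div_le_self (by positivity) (by linarith [(i.cast_nonneg : (0 : ℝ) ≤ i)])
      _ ≤ |c| ^ (i + 1) * x ^ n k := by
          gcongr
          exact pow_le_of_le_one (pow_nonneg hx0 _) (hpow_le k) i.succ_ne_zero
  have hrow (i : ℕ) : HasSum (fun k => g (i, k)) (c ^ (i + 1) / (i + 1) * F (x ^ (i + 1))) := by
    have hterm : (fun k => g (i, k)) = fun k => c ^ (i + 1) / (i + 1) * (x ^ (i + 1)) ^ n k := by
      funext k
      simp only [g, mul_pow, ← pow_mul, mul_comm (n k)]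
      ring
    rw [hterm]
    exact (hF _ (pow_nonneg hx0 _) (pow_lt_one₀ hx0 hx1 i.succ_ne_zero)).mul_left _
  have hcol (k : β) : HasSum (fun i => g (i, k)) (log (1 - c * x ^ n k)⁻¹) := by
    rw [log_inv]
    show HasSum (fun i : ℕ => (c * x ^ n k) ^ (i + 1) / ((i : ℝ) + 1)) _
    exact hasSum_pow_div_log_of_abs_lt_one (habs k)
  have hlog : HasSum (fun k => log (1 - c * x ^ n k)⁻¹)
      (∑' i : ℕ, c ^ (i + 1) / (i + 1) * F (x ^ (i + 1))) := by
    rw [(hg.hasSum.prod_fiberwise hrow).tsum_eq]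
    exact ((Equiv.prodComm β ℕ).hasSum_iff.mpr hg.hasSum).prod_fiberwise hcol
  convert hlog.rexp using 1
  funext k
  have hlt := (abs_lt.mp (habs k)).2
  exact (exp_log (inv_pos.mpr (by linarith))).symm

theorem zeta_BG_chevalley_general (q : ℝ) (hq : 1 < q) (r : ℕ) (d : Fin r → ℕ)
    (hd : ∀ j, 1 ≤ d j) (D : ℕ) (t : ℝ) (ht : |t| < q ^ D) :
    Multipliable (fun k : Fin r → ℕ =>
      (1 - q ^ (-((∑ j, ((k j : ℤ) + 1) * (d j : ℤ)) + (D : ℤ) - ∑ j, (d j : ℤ))) * t)⁻¹) ∧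
    Real.exp (∑' i : ℕ, (t ^ (i + 1) / (i + 1)) *
        (q ^ (-(((i : ℤ) + 1) * (D : ℤ))) *
          ∏ j, (1 - q ^ (-(((i : ℤ) + 1) * (d j : ℤ))))⁻¹)) =
      ∏' k : Fin r → ℕ,
        (1 - q ^ (-((∑ j, ((k j : ℤ) + 1) * (d j : ℤ)) + (D : ℤ) - ∑ j, (d j : ℤ))) * t)⁻¹ := by
  have hzpow (m : ℕ) : q ^ (-(m : ℤ)) = q⁻¹ ^ m := by rw [zpow_neg, zpow_natCast, inv_pow]
  have hfactor (k : Fin r → ℕ) :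
      q ^ (-((∑ j, ((k j : ℤ) + 1) * (d j : ℤ)) + (D : ℤ) - ∑ j, (d j : ℤ))) * t
        = q⁻¹ ^ D * t * q⁻¹ ^ ∑ j, k j * d j := by
    have hexp : (∑ j, ((k j : ℤ) + 1) * (d j : ℤ)) + (D : ℤ) - ∑ j, (d j : ℤ)
        = ((D + ∑ j, k j * d j : ℕ) : ℤ) := by
      push_cast; simp only [add_mul, one_mul, sum_add_distrib]; ring
    rw [hexp, hzpow, pow_add]
    ring
  have hcoeff (i : ℕ) : t ^ (i + 1) / (i + 1) * (q ^ (-(((i : ℤ) + 1) * (D : ℤ))) *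
        ∏ j, (1 - q ^ (-(((i : ℤ) + 1) * (d j : ℤ))))⁻¹)
      = (q⁻¹ ^ D * t) ^ (i + 1) / (i + 1) * ∏ j, (1 - (q⁻¹ ^ (i + 1)) ^ d j)⁻¹ := by
    have hpow (m : ℕ) : q ^ (-(((i : ℤ) + 1) * (m : ℤ))) = (q⁻¹ ^ (i + 1)) ^ m := by
      rw [← pow_mul, ← hzpow]; push_cast; rfl
    simp only [hpow, mul_pow, ← pow_mul]
    ring
  have hc : |q⁻¹ ^ D * t| < 1 := by
    rw [abs_mul, abs_of_pos (by positivity), inv_pow, inv_mul_lt_iff₀ (by positivity), mul_one]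
    exact ht
  have H := hasProd_inv_one_sub_mul_pow (fun y hy0 hy1 => hasSum_pow_sum_mul hd hy0 hy1)
    (by positivity) (inv_lt_one_of_one_lt₀ hq) hc
  simp only [hfactor, hcoeff]
  exact ⟨H.multipliable, H.tprod_eq.symm⟩

/-- Zeta function of the classifying stack `BG` of a Chevalley group scheme `G` of rank `r ≥ 1`,
dimension `D`, with Weyl group invariant degrees `d_1, …, d_r`:
`ζ_{BG}(t) = ∏_{k_1,…,k_r ≥ 1} (1 - q^{-(∑ j k_j d_j + D - ∑ j d_j)} t)⁻¹`,
where `#BG(𝔽_{qⁱ}) = q^{-iD} ∏_j (1 - q^{-i d_j})⁻¹`. Positive integer tuples `(k_1,…,k_r)`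
are encoded as `k : Fin r → ℕ` via `k_j = k j + 1`. -/
theorem zeta_BG_chevalley (q : ℝ) (hq : 1 < q) (r : ℕ) (hr : 1 ≤ r) (d : Fin r → ℕ)
    (hd : ∀ j, 1 ≤ d j) (D : ℕ) (t : ℝ) (ht : |t| < q ^ D) :
    Multipliable (fun k : Fin r → ℕ =>
      (1 - q ^ (-((∑ j, ((k j : ℤ) + 1) * (d j : ℤ)) + (D : ℤ) - ∑ j, (d j : ℤ))) * t)⁻¹) ∧
    Real.exp (∑' i : ℕ, (t ^ (i + 1) / (i + 1)) *
        (q ^ (-(((i : ℤ) + 1) * (D : ℤ))) *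
          ∏ j, (1 - q ^ (-(((i : ℤ) + 1) * (d j : ℤ))))⁻¹)) =
      ∏' k : Fin r → ℕ,
        (1 - q ^ (-((∑ j, ((k j : ℤ) + 1) * (d j : ℤ)) + (D : ℤ) - ∑ j, (d j : ℤ))) * t)⁻¹ :=
  zeta_BG_chevalley_general q hq r d hd D t ht
end

section
/- Let n ≥ 1 be a natural number, let F be a finite field with q elements, and let SL_{n+1}(F) denote the special linear group of (n+1)×(n+1) matrices over F with determinant 1. Then the family of real numbers q^{-(2 i_1 + 3 i_2 + ⋯ + (n+1) i_n + n(n+2))}, indexed by tuples (i_1, …, i_n) ∈ ℕ^n, is summable and ∑_{(i_1,…,i_n) ∈ ℕ^n} q^{-(2 i_1 + 3 i_2 + ⋯ + (n+1) i_n + n(n+2))} = 1 / (Nat.card SL_{n+1}(F)). (This expresses that the groupoid cardinality # B SL_{n+1}(F_q), computed cohomologically by the trace formula, equals the reciprocal of the order of the finite group SL_{n+1}(F_q).) -/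
/-!
Expanding each factor `(1 - q^{-(j+2)})⁻¹` as a geometric series shows that the series equals
`q^{-n(n+2)} ∏_{j<n} (1 - q^{-(j+2)})⁻¹`. On the other side, `SL_{n+1}(F)` is the kernel of the
surjection `det : GL_{n+1}(F) → Fˣ`, so `#SL_{n+1}(F) = #GL_{n+1}(F) / (q - 1)`, and
`#GL_{n+1}(F) = ∏_{i ≤ n} (q^{n+1} - q^i) = q^{(n+1)^2} ∏_{k=1}^{n+1} (1 - q^{-k})`; the factor
`q (1 - q^{-1}) = q - 1` cancels, leaving `q^{n(n+2)} ∏_{k=2}^{n+1} (1 - q^{-k})`.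
-/

open Finset

theorem prod_pow_sub_pow_eq_pow_mul_prod {K : Type*} [Field K] {Q : K} (hQ : Q ≠ 0) (m : ℕ) :
    ∏ i : Fin m, (Q ^ m - Q ^ (i : ℕ)) = Q ^ (m * m) * ∏ k : Fin m, (1 - Q⁻¹ ^ ((k : ℕ) + 1)) := by
  have hfactor : ∀ i : Fin m, Q ^ m - Q ^ (i : ℕ) = Q ^ m * (1 - Q⁻¹ ^ (m - i)) := fun i => by
    rw [mul_sub, mul_one, inv_pow, ← pow_sub₀ Q hQ (Nat.sub_le m i), Nat.sub_sub_self i.2.le]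
  rw [Finset.prod_congr rfl fun i _ => hfactor i, prod_mul_distrib, prod_const, card_univ,
    Fintype.card_fin, ← pow_mul]
  congr 1
  refine Fintype.prod_equiv Fin.revPerm _ _ fun i => ?_
  rw [Fin.revPerm_apply, Fin.val_rev]
  congr 2
  omega

namespace Matrix

theorem card_specialLinearGroup_mul_card_units {ι R : Type*} [Fintype ι] [DecidableEq ι]
    [Nonempty ι] [CommRing R] :
    Nat.card (SpecialLinearGroup ι R) * Nat.card Rˣ = Nat.card (GL ι R) := by
  have hker : Nat.card (SpecialLinearGroup ι R) =
      Nat.card (GeneralLinearGroup.det : GL ι R →* Rˣ).ker :=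
    Nat.card_congr
      { toFun := fun A => ⟨A.toGL, A.coeToGL_det⟩
        invFun := fun g => ⟨g.1, congrArg Units.val g.2⟩
        left_inv := fun _ => rfl
        right_inv := fun _ => Subtype.ext (Units.ext rfl) }
  rw [hker, ← (GeneralLinearGroup.det : GL ι R →* Rˣ).ker.card_mul_index, Subgroup.index_ker,
    MonoidHom.range_eq_top.mpr GeneralLinearGroup.det_surjective, Subgroup.card_top]

theorem card_specialLinearGroup_fin_succ_eq (n : ℕ) (K : Type*) [Field K] [Fintype K] :
    (Nat.card (SpecialLinearGroup (Fin (n + 1)) K) : ℝ) =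
      (Fintype.card K : ℝ) ^ (n * (n + 2)) *
        ∏ j : Fin n, (1 - (Fintype.card K : ℝ)⁻¹ ^ ((j : ℕ) + 2)) := by
  set q := Fintype.card K
  have hq : 1 ≤ q := Fintype.card_pos
  have hq0 : (q : ℝ) ≠ 0 := by positivity
  have hGL : (Nat.card (GL (Fin (n + 1)) K) : ℝ) =
      q ^ ((n + 1) * (n + 1)) * ∏ k : Fin (n + 1), (1 - (q : ℝ)⁻¹ ^ ((k : ℕ) + 1)) := by
    rw [card_GL_field, Nat.cast_prod, ← prod_pow_sub_pow_eq_pow_mul_prod hq0]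
    refine prod_congr rfl fun i _ => ?_
    rw [Nat.cast_sub (Nat.pow_le_pow_right hq i.2.le), Nat.cast_pow, Nat.cast_pow]
  have hunits : (Nat.card Kˣ : ℝ) = q * (1 - (q : ℝ)⁻¹) := by
    rw [Nat.card_units, Nat.card_eq_fintype_card, Nat.cast_sub hq, mul_sub, mul_inv_cancel₀ hq0]
    simp
  have hunits_ne : (Nat.card Kˣ : ℝ) ≠ 0 := by exact_mod_cast Nat.card_pos.ne'
  have hcard : (Nat.card (SpecialLinearGroup (Fin (n + 1)) K) : ℝ) * Nat.card Kˣ =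
      Nat.card (GL (Fin (n + 1)) K) := by
    exact_mod_cast card_specialLinearGroup_mul_card_units
  apply mul_right_cancel₀ hunits_ne
  rw [hcard, hGL, hunits, Fin.prod_univ_succ]
  simp only [Fin.val_zero, Fin.val_succ]
  ring

end Matrix

theorem hasSum_fin_pi_prod {β : Type*} {n : ℕ} {f : Fin n → β → ℝ} {a : Fin n → ℝ}
    (h : ∀ j, HasSum (f j) (a j)) : HasSum (fun i : Fin n → β => ∏ j, f j (i j)) (∏ j, a j) := by
  induction n with
  | zero => simp
  | succ n ih =>
    have htail : HasSum (fun i : Fin n → β => ∏ j : Fin n, f j.succ (i j))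
        (∏ j : Fin n, a j.succ) :=
      ih fun j => h j.succ
    -- summability in `ℝ` is absolute, so the Cauchy product converges
    have hsummable : Summable fun p : β × (Fin n → β) => f 0 p.1 * ∏ j : Fin n, f j.succ (p.2 j) :=
      ((h 0).summable.norm.mul_norm htail.summable.norm).of_norm
    have hcons (p : β × (Fin n → β)) :
        ∏ j, f j (Fin.consEquiv (fun _ => β) p j) = f 0 p.1 * ∏ j : Fin n, f j.succ (p.2 j) := by
      simp [Fin.consEquiv, Fin.prod_univ_succ]
    rw [Fin.prod_univ_succ, ← (Fin.consEquiv fun _ => β).hasSum_iff, Function.comp_def]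
    simpa only [hcons] using (h 0).mul htail hsummable

theorem hasSum_pow_weighted_sum {n : ℕ} {x : ℝ} (hx : |x| < 1) {w : Fin n → ℕ}
    (hw : ∀ j, w j ≠ 0) :
    HasSum (fun i : Fin n → ℕ => x ^ ∑ j, w j * i j) (∏ j, (1 - x ^ w j)⁻¹) := by
  have hgeom : ∀ j, HasSum (fun k : ℕ => (x ^ w j) ^ k) (1 - x ^ w j)⁻¹ := fun j =>
    hasSum_geometric_of_abs_lt_one <| by
      rw [abs_pow]; exact pow_lt_one₀ (abs_nonneg x) hx (hw j)
  simpa only [← prod_pow_eq_pow_sum, pow_mul] using hasSum_fin_pi_prod hgeom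

theorem B_SL_point_count_eq_card_inv_general (n : ℕ) (F : Type) [Field F] [Fintype F]
    (q : ℕ) (hq : Fintype.card F = q) :
    Summable (fun i : Fin n → ℕ =>
      (q : ℝ) ^ (-((∑ j : Fin n, (((j : ℕ) : ℤ) + 2) * (i j : ℤ)) + (n * (n + 2) : ℕ)))) ∧
    ∑' i : Fin n → ℕ,
        (q : ℝ) ^ (-((∑ j : Fin n, (((j : ℕ) : ℤ) + 2) * (i j : ℤ)) + (n * (n + 2) : ℕ))) =
      1 / (Nat.card (Matrix.SpecialLinearGroup (Fin (n + 1)) F) : ℝ) := by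
  have hsummand (i : Fin n → ℕ) :
      (q : ℝ) ^ (-((∑ j : Fin n, (((j : ℕ) : ℤ) + 2) * (i j : ℤ)) + (n * (n + 2) : ℕ))) =
        (q : ℝ)⁻¹ ^ (n * (n + 2)) * (q : ℝ)⁻¹ ^ ∑ j : Fin n, ((j : ℕ) + 2) * i j := by
    have hexp : (∑ j : Fin n, (((j : ℕ) : ℤ) + 2) * (i j : ℤ)) + (n * (n + 2) : ℕ) =
        ((n * (n + 2) + ∑ j : Fin n, ((j : ℕ) + 2) * i j : ℕ) : ℤ) := by
      push_cast; ring
    rw [hexp, zpow_neg, zpow_natCast, ← inv_pow, pow_add]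
  have hx : |(q : ℝ)⁻¹| < 1 := by
    rw [abs_inv, Nat.abs_cast]
    exact inv_lt_one_of_one_lt₀ (by exact_mod_cast hq ▸ Fintype.one_lt_card)
  have hsum := (hasSum_pow_weighted_sum hx (w := fun j : Fin n => (j : ℕ) + 2)
    fun _ => by omega).mul_left ((q : ℝ)⁻¹ ^ (n * (n + 2)))
  simp only [hsummand]
  refine ⟨hsum.summable, hsum.tsum_eq.trans ?_⟩
  rw [Matrix.card_specialLinearGroup_fin_succ_eq, hq, one_div, mul_inv, prod_inv_distrib, inv_pow]

/-- The groupoid cardinality `#B SL_{n+1}(𝔽_q)` computed cohomologically by the trace formula,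
namely `∑_{i ∈ ℕⁿ} q^{-(∑_j (j+2) i_j + n(n+2))}`, equals the reciprocal of the order of the
finite group `SL_{n+1}(𝔽_q)`, where `F` is a finite field with `q` elements. -/
theorem B_SL_point_count_eq_card_inv (n : ℕ) (hn : 1 ≤ n) (F : Type) [Field F] [Fintype F]
    (q : ℕ) (hq : Fintype.card F = q) :
    Summable (fun i : Fin n → ℕ =>
      (q : ℝ) ^ (-((∑ j : Fin n, (((j : ℕ) : ℤ) + 2) * (i j : ℤ)) + (n * (n + 2) : ℕ)))) ∧
    ∑' i : Fin n → ℕ,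
        (q : ℝ) ^ (-((∑ j : Fin n, (((j : ℕ) : ℤ) + 2) * (i j : ℤ)) + (n * (n + 2) : ℕ))) =
      1 / (Nat.card (Matrix.SpecialLinearGroup (Fin (n + 1)) F) : ℝ) :=
  B_SL_point_count_eq_card_inv_general n F q hq
end

section
/- Let q > 1 be a real number. For every real number t with |t| < q^{14}: the family (1 - q^{-(2 k_1 + 6 k_2 + 6)} t)^{-1}, indexed by pairs (k_1, k_2) of positive integers, is multipliable, and exp( ∑_{i=1}^∞ (t^i / i) · ( q^{14 i} (1 - q^{-2i}) (1 - q^{-6i}) )^{-1} ) = ∏_{k_1=1}^∞ ∏_{k_2=1}^∞ (1 - q^{-(2 k_1 + 6 k_2 + 6)} t)^{-1}. (This is the zeta function formula ζ_{BG_2}(t) = ∏_{k_1,k_2 ≥ 1} (1 - q^{-(2k_1 + 6k_2 + 6)} t)^{-1} for the classifying stack of the exceptional group G_2.) -/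
/-!
Put `x k = q^{-(2k₁+6k₂+14)} t` for `k₁, k₂ ≥ 0`. Since `|x k| < 1` and `∑ |x k| < ∞`, expanding
`log (1 - x k)⁻¹ = ∑_{i ≥ 1} (x k)ⁱ / i` gives an absolutely convergent double series, so the two
sums may be swapped. For fixed `i` the sum over `k` is `q^{-14i} tⁱ` times a product of two
geometric series, `∑_{k₁,k₂} q^{-2ik₁} q^{-6ik₂} = ((1 - q^{-2i}) (1 - q^{-6i}))⁻¹`, which is the
`i`-th term of `log ζ_{BG₂}(t)`.
-/

open Real

section LogExpansion

variable {ι : Type*} {x : ι → ℝ}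

lemma summable_uncurry_pow_succ_div (hx : ∀ k, |x k| < 1) (hs : Summable x) :
    Summable (Function.uncurry fun k (i : ℕ) => x k ^ (i + 1) / (i + 1)) := by
  have habs : ∀ k, HasSum (fun i : ℕ => |x k ^ (i + 1) / (i + 1)|) (-log (1 - |x k|)) := by
    intro k
    have := hasSum_pow_div_log_of_abs_lt_one ((abs_abs (x k)).trans_lt (hx k))
    simpa only [abs_div, abs_pow, abs_of_pos (Nat.cast_add_one_pos (α := ℝ) _)] using this
  rw [← summable_abs_iff]
  refine (summable_prod_of_nonneg fun _ => abs_nonneg _).2 ⟨fun k => (habs k).summable, ?_⟩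
  simp only [Function.uncurry_apply_pair, fun k => (habs k).tsum_eq, sub_eq_add_neg]
  exact (summable_log_one_add_of_summable hs.abs.neg).neg

theorem hasProd_inv_one_sub_exp_tsum_pow_div (hx : ∀ k, |x k| < 1) (hs : Summable x) :
    HasProd (fun k => (1 - x k)⁻¹) (exp (∑' (i : ℕ) (k : ι), x k ^ (i + 1) / (i + 1))) := by
  have hpos : ∀ k, 0 < (1 - x k)⁻¹ := fun k => by
    have := (abs_lt.1 (hx k)).2
    positivity
  have hlog : Summable fun k => log ((1 - x k)⁻¹) := by
    simpa only [log_inv, sub_eq_add_neg] using (summable_log_one_add_of_summable hs.neg).neg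
  convert hasProd_of_hasSum_log hpos hlog.hasSum using 2
  rw [(summable_uncurry_pow_succ_div hx hs).tsum_comm]
  refine tsum_congr fun k => ?_
  rw [log_inv, (hasSum_pow_div_log_of_abs_lt_one (hx k)).tsum_eq]

end LogExpansion

lemma hasSum_pow_mul_pow {a b : ℝ} (ha : |a| < 1) (hb : |b| < 1) :
    HasSum (fun k : ℕ × ℕ => a ^ k.1 * b ^ k.2) ((1 - a)⁻¹ * (1 - b)⁻¹) :=
  (hasSum_geometric_of_abs_lt_one ha).mul (hasSum_geometric_of_abs_lt_one hb)
    (summable_mul_of_summable_norm (summable_geometric_of_abs_lt_one ha).norm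
      (summable_geometric_of_abs_lt_one hb).norm)

theorem hasProd_inv_one_sub_pow_mul_pow_mul {a b c : ℝ} (ha : |a| < 1) (hb : |b| < 1)
    (hc : |c| < 1) :
    HasProd (fun k : ℕ × ℕ => (1 - a ^ k.1 * b ^ k.2 * c)⁻¹)
      (exp (∑' i : ℕ, c ^ (i + 1) / (i + 1) * ((1 - a ^ (i + 1)) * (1 - b ^ (i + 1)))⁻¹)) := by
  have hx : ∀ k : ℕ × ℕ, |a ^ k.1 * b ^ k.2 * c| < 1 := fun k => by
    rw [abs_mul, abs_mul, abs_pow, abs_pow]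
    calc |a| ^ k.1 * |b| ^ k.2 * |c| ≤ 1 * 1 * |c| := by
          gcongr
          exacts [pow_le_one₀ (abs_nonneg a) ha.le, pow_le_one₀ (abs_nonneg b) hb.le]
      _ < 1 := by rwa [one_mul, one_mul]
  convert hasProd_inv_one_sub_exp_tsum_pow_div hx ((hasSum_pow_mul_pow ha hb).mul_right c).summable
    using 1
  refine congrArg exp (tsum_congr fun i => ?_)
  have hpow : ∀ {r : ℝ}, |r| < 1 → |r ^ (i + 1)| < 1 := fun hr => by
    rw [abs_pow]; exact pow_lt_one₀ (abs_nonneg _) hr i.succ_ne_zero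
  rw [mul_inv, ← ((hasSum_pow_mul_pow (hpow ha) (hpow hb)).mul_left _).tsum_eq]
  refine tsum_congr fun k => ?_
  ring

lemma zpow_neg_natCast_mul_eq_inv_pow_pow (q : ℝ) (m n : ℕ) :
    q ^ (-((m : ℤ) * n)) = ((q ^ m)⁻¹) ^ n := by
  rw [zpow_neg, ← Nat.cast_mul, zpow_natCast, pow_mul, inv_pow]

/-- Zeta function of the classifying stack of the exceptional group `G₂`:
for real `q > 1` and `|t| < q^{14}`,
`ζ_{BG₂}(t) = exp(∑_{i≥1} (tⁱ/i) (q^{14i}(1-q^{-2i})(1-q^{-6i}))⁻¹)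
  = ∏_{k₁,k₂ ≥ 1} (1 - q^{-(2k₁+6k₂+6)} t)⁻¹`.
Pairs of positive integers `(k₁,k₂)` are encoded as `k : ℕ × ℕ` via `kⱼ = k.j + 1`. -/
theorem zeta_BG2 (q : ℝ) (hq : 1 < q) (t : ℝ) (ht : |t| < q ^ (14 : ℕ)) :
    Multipliable (fun k : ℕ × ℕ =>
      (1 - q ^ (-(2 * ((k.1 : ℤ) + 1) + 6 * ((k.2 : ℤ) + 1) + 6)) * t)⁻¹) ∧
    Real.exp (∑' i : ℕ, (t ^ (i + 1) / (i + 1)) *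
        (q ^ (14 * (i + 1)) * (1 - q ^ (-(2 * ((i : ℤ) + 1)))) *
          (1 - q ^ (-(6 * ((i : ℤ) + 1)))))⁻¹) =
      ∏' k : ℕ × ℕ, (1 - q ^ (-(2 * ((k.1 : ℤ) + 1) + 6 * ((k.2 : ℤ) + 1) + 6)) * t)⁻¹ := by
  have hq0 : 0 < q := zero_lt_one.trans hq
  have hinv : ∀ {n : ℕ}, n ≠ 0 → |(q ^ n)⁻¹| < 1 := fun hn => by
    rw [abs_inv, abs_of_pos (by positivity)]
    exact inv_lt_one_of_one_lt₀ (one_lt_pow₀ hq hn)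
  have hc : |t / q ^ 14| < 1 := by
    rwa [abs_div, abs_of_pos (pow_pos hq0 14), div_lt_one (pow_pos hq0 14)]
  have key := hasProd_inv_one_sub_pow_mul_pow_mul (hinv (n := 2) two_ne_zero)
    (hinv (n := 6) (by norm_num)) hc
  have hfactor : ∀ k : ℕ × ℕ, q ^ (-(2 * ((k.1 : ℤ) + 1) + 6 * ((k.2 : ℤ) + 1) + 6)) * t =
      ((q ^ 2)⁻¹) ^ k.1 * ((q ^ 6)⁻¹) ^ k.2 * (t / q ^ 14) := fun k => by
    rw [show -(2 * ((k.1 : ℤ) + 1) + 6 * ((k.2 : ℤ) + 1) + 6) =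
        -((2 : ℕ) * (k.1 : ℤ)) + -((6 : ℕ) * (k.2 : ℤ)) + -((14 : ℕ) : ℤ) by push_cast; ring,
      zpow_add₀ hq0.ne', zpow_add₀ hq0.ne', zpow_neg_natCast_mul_eq_inv_pow_pow,
      zpow_neg_natCast_mul_eq_inv_pow_pow, zpow_neg, zpow_natCast]
    ring
  have hterm : ∀ i : ℕ, (t ^ (i + 1) / (i + 1)) * (q ^ (14 * (i + 1)) *
      (1 - q ^ (-(2 * ((i : ℤ) + 1)))) * (1 - q ^ (-(6 * ((i : ℤ) + 1)))))⁻¹ =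
      (t / q ^ 14) ^ (i + 1) / (i + 1) *
        ((1 - ((q ^ 2)⁻¹) ^ (i + 1)) * (1 - ((q ^ 6)⁻¹) ^ (i + 1)))⁻¹ := fun i => by
    have hi : (i : ℤ) + 1 = ((i + 1 : ℕ) : ℤ) := by push_cast; ring
    rw [hi, show (2 : ℤ) = (2 : ℕ) by rfl, show (6 : ℤ) = (6 : ℕ) by rfl,
      zpow_neg_natCast_mul_eq_inv_pow_pow, zpow_neg_natCast_mul_eq_inv_pow_pow, div_pow, ← pow_mul]
    simp only [mul_inv]
    ring
  simp only [hfactor, hterm]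
  exact ⟨key.multipliable, key.tprod_eq.symm⟩
end

section
/- Let q > 1 be a real number and let n ≥ 2 be a natural number. For every real number t with |t| < q^{n(2n-1)}: the family (1 + (-1)^{k_1} q^{-(n k_1 + 2 k_2 + 4 k_3 + ⋯ + (2n-2) k_n + n(n-1))} t)^{-1}, indexed by tuples (k_1, …, k_n) of positive integers, is multipliable, and exp( ∑_{i=1}^∞ (t^i / i) · ( q^{n(2n-1) i} (1 - (-1)^i q^{-n i}) ∏_{j=1}^{n-1} (1 - q^{-2 j i}) )^{-1} ) = ∏_{k_1=1}^∞ ⋯ ∏_{k_n=1}^∞ (1 + (-1)^{k_1} q^{-(n k_1 + 2 k_2 + ⋯ + (2n-2) k_n + n(n-1))} t)^{-1}. (This is the zeta function formula for the classifying stack of the twisted Chevalley group ²D_n.) -/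
/-!
Write each factor of the product as `(1 - xₖ)⁻¹` with `xₖ = a ∏ⱼ wⱼ ^ kⱼ`, `a = t q^{-n(2n-1)}`
and `w = (-q^{-n}, q^{-2}, …, q^{-(2n-2)})` the Frobenius-twisted weights of the invariant
degrees. Summing the multi-geometric series `∑ₖ ∏ⱼ wⱼ ^ (i kⱼ) = ∏ⱼ (1 - wⱼ ^ i)⁻¹` identifies
`tⁱ / i · #B²Dₙ(𝔽_{qⁱ})` with `∑ₖ xₖ ^ i / i`. Absolute convergence lets us exchange the sums
over `i` and `k`, and `∑ᵢ xⁱ / i = -log (1 - x)` turns the exponential of the result into the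
product.
-/

open Finset

theorem Fin.prod_pow_cons {M : Type*} [CommMonoid M] {m : ℕ} (c : Fin (m + 1) → M) (a : ℕ)
    (k : Fin m → ℕ) :
    ∏ j, c j ^ (Fin.cons a k : Fin (m + 1) → ℕ) j = c 0 ^ a * ∏ j, c j.succ ^ k j := by
  simp [Fin.prod_univ_succ]

theorem zpow_neg_eq_inv_pow {α : Type*} [DivisionMonoid α] {a : α} {z : ℤ} {e : ℕ} (h : z = e) :
    a ^ (-z) = a⁻¹ ^ e := by
  rw [h, zpow_neg, zpow_natCast, inv_pow]

section MultiGeometric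

variable {𝕜 : Type*} [NormedField 𝕜] [CompleteSpace 𝕜]

theorem summable_norm_prod_pow_and_hasSum_prod_pow {m : ℕ} {c : Fin m → 𝕜}
    (hc : ∀ j, ‖c j‖ < 1) :
    Summable (fun k : Fin m → ℕ => ‖∏ j, c j ^ k j‖) ∧
      HasSum (fun k : Fin m → ℕ => ∏ j, c j ^ k j) (∏ j, (1 - c j)⁻¹) := by
  induction m with
  | zero =>
    simp only [univ_eq_empty, prod_empty, norm_one]
    exact ⟨(hasSum_unique _).summable, hasSum_unique _⟩
  | succ m ih =>
    obtain ⟨ihS, ihH⟩ := ih (c := fun j => c j.succ) fun j => hc j.succ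
    have hgS : Summable fun a : ℕ => ‖c 0 ^ a‖ := by
      simpa [norm_pow] using summable_geometric_of_lt_one (norm_nonneg _) (hc 0)
    let e : ℕ × (Fin m → ℕ) ≃ (Fin (m + 1) → ℕ) := Fin.consEquiv fun _ => ℕ
    rw [← e.summable_iff, ← e.hasSum_iff]
    simp only [Function.comp_def, e, Fin.consEquiv_apply, Fin.prod_pow_cons,
      Fin.prod_univ_succ fun j => (1 - c j)⁻¹]
    have hnorm := hgS.mul_norm ihS
    have hsummable := summable_mul_of_summable_norm hgS ihS
    have hsum := (hasSum_geometric_of_norm_lt_one (hc 0)).mul ihH hsummable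
    exact ⟨hnorm, hsum⟩

theorem tsum_mul_prod_pow_pow {m : ℕ} (a : 𝕜) {c : Fin m → 𝕜} (hc : ∀ j, ‖c j‖ < 1) {e : ℕ}
    (he : e ≠ 0) :
    ∑' k : Fin m → ℕ, (a * ∏ j, c j ^ k j) ^ e = a ^ e * ∏ j, (1 - c j ^ e)⁻¹ := by
  have hce j : ‖c j ^ e‖ < 1 := by
    rw [norm_pow]
    exact pow_lt_one₀ (norm_nonneg _) (hc j) he
  rw [← (summable_norm_prod_pow_and_hasSum_prod_pow hce).2.tsum_eq, ← tsum_mul_left]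
  refine tsum_congr fun k => ?_
  simp only [mul_pow, ← prod_pow, ← pow_mul, mul_comm]

end MultiGeometric

namespace Real

variable {ι : Type*} {x : ι → ℝ}

theorem summable_uncurry_pow_succ_div (hlt : ∀ k, |x k| < 1) (hx : Summable x) :
    Summable (Function.uncurry fun k (i : ℕ) => x k ^ (i + 1) / (i + 1)) := by
  refine Summable.of_norm ?_
  have hnorm : (fun p : ι × ℕ => ‖Function.uncurry (fun k (i : ℕ) => x k ^ (i + 1) / (i + 1)) p‖)
      = fun p => |x p.1| ^ (p.2 + 1) / (p.2 + 1) := by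
    ext ⟨k, i⟩
    simp only [Function.uncurry_apply_pair, norm_div, norm_pow, norm_eq_abs]
    rw [abs_of_pos (by positivity : (0 : ℝ) < i + 1)]
  rw [hnorm, summable_prod_of_nonneg fun p => by positivity]
  have hlog k := hasSum_pow_div_log_of_abs_lt_one (x := |x k|) (by rw [abs_abs]; exact hlt k)
  refine ⟨fun k => (hlog k).summable, ?_⟩
  simp only [fun k => (hlog k).tsum_eq, sub_eq_add_neg]
  exact (summable_log_one_add_of_summable hx.abs.neg).neg

theorem exp_tsum_tsum_pow_succ_div_eq_tprod (hlt : ∀ k, |x k| < 1) (hx : Summable x) :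
    Multipliable (fun k => (1 - x k)⁻¹) ∧
      exp (∑' i : ℕ, ∑' k, x k ^ (i + 1) / (i + 1)) = ∏' k, (1 - x k)⁻¹ := by
  have hpos k : 0 < (1 - x k)⁻¹ := inv_pos.2 (by linarith [(abs_lt.1 (hlt k)).2])
  have hlog : Summable fun k => log (1 - x k)⁻¹ := by
    simpa [log_inv, sub_eq_add_neg] using (summable_log_one_add_of_summable hx.neg).neg
  refine ⟨multipliable_of_summable_log hpos hlog, ?_⟩
  rw [← rexp_tsum_eq_tprod hpos hlog, (summable_uncurry_pow_succ_div hlt hx).tsum_comm]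
  congr 1
  refine tsum_congr fun k => ?_
  rw [(hasSum_pow_div_log_of_abs_lt_one (hlt k)).tsum_eq, log_inv]

theorem exp_tsum_pow_succ_div_mul_prod_eq_tprod {m : ℕ} {a : ℝ} {c : Fin m → ℝ} (ha : |a| < 1)
    (hc : ∀ j, |c j| < 1) :
    Multipliable (fun k : Fin m → ℕ => (1 - a * ∏ j, c j ^ k j)⁻¹) ∧
      exp (∑' i : ℕ, a ^ (i + 1) / (i + 1) * ∏ j, (1 - c j ^ (i + 1))⁻¹) =
        ∏' k : Fin m → ℕ, (1 - a * ∏ j, c j ^ k j)⁻¹ := by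
  simp only [← norm_eq_abs] at hc
  obtain ⟨hS, -⟩ := summable_norm_prod_pow_and_hasSum_prod_pow hc
  have hlt (k : Fin m → ℕ) : |a * ∏ j, c j ^ k j| < 1 := by
    rw [abs_mul, abs_prod]
    refine lt_of_le_of_lt (mul_le_of_le_one_right (abs_nonneg a) ?_) ha
    exact prod_le_one (fun j _ => abs_nonneg _) fun j _ => by
      rw [abs_pow, ← norm_eq_abs]
      exact pow_le_one₀ (norm_nonneg _) (hc j).le
  refine (exp_tsum_tsum_pow_succ_div_eq_tprod hlt (hS.of_norm.mul_left a)).imp_right ?_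
  refine Eq.trans (congrArg exp (tsum_congr fun i => ?_))
  rw [tsum_div_const, tsum_mul_prod_pow_pow a hc i.succ_ne_zero, div_mul_eq_mul_div]

end Real

/-- The Frobenius-twisted weights `ε q^{-d}` of the invariant degrees of `²Dₙ`, `n = m + 1`:
the degree `n` with `ε = -1`, then the degrees `2, 4, …, 2m` with `ε = 1`. -/
noncomputable def twistedDWeight (q : ℝ) (m : ℕ) : Fin (m + 1) → ℝ :=
  Fin.cons (-q⁻¹ ^ (m + 1)) fun j => q⁻¹ ^ (2 * ((j : ℕ) + 1))

section TwistedD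

variable {q : ℝ} {m : ℕ}

theorem abs_twistedDWeight_lt_one (hq : 1 < q) (j : Fin (m + 1)) :
    |twistedDWeight q m j| < 1 := by
  have hq' : |q⁻¹| < 1 := by
    rw [abs_inv, abs_of_pos (zero_lt_one.trans hq)]
    exact inv_lt_one_of_one_lt₀ hq
  cases j using Fin.cases with
  | zero => simpa [twistedDWeight, abs_pow] using pow_lt_one₀ (abs_nonneg _) hq' m.succ_ne_zero
  | succ j =>
    simpa [twistedDWeight, abs_pow] using
      pow_lt_one₀ (abs_nonneg _) hq' (by omega : 2 * ((j : ℕ) + 1) ≠ 0)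

theorem prod_twistedDWeight_pow (k : Fin (m + 1) → ℕ) :
    ∏ j, twistedDWeight q m j ^ k j =
      (-1) ^ k 0 * q⁻¹ ^ ((m + 1) * k 0 + ∑ j : Fin m, 2 * ((j : ℕ) + 1) * k j.succ) := by
  simp only [Fin.prod_univ_succ, twistedDWeight, Fin.cons_zero, Fin.cons_succ, ← pow_mul,
    prod_pow_eq_pow_sum, pow_add]
  ring

theorem prod_one_sub_twistedDWeight_pow (i : ℕ) :
    ∏ j, (1 - twistedDWeight q m j ^ i) =
      (1 - (-1) ^ i * q⁻¹ ^ ((m + 1) * i)) * ∏ j : Fin m, (1 - q⁻¹ ^ (2 * ((j : ℕ) + 1) * i)) := by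
  simp only [Fin.prod_univ_succ, twistedDWeight, Fin.cons_zero, Fin.cons_succ,
    neg_pow (q⁻¹ ^ (m + 1)), ← pow_mul]

end TwistedD

theorem sum_fin_two_mul_succ (m : ℕ) : ∑ j : Fin m, 2 * ((j : ℕ) + 1) = m * (m + 1) := by
  induction m with
  | zero => rfl
  | succ m ih =>
    rw [Fin.sum_univ_castSucc]
    simp only [Fin.val_castSucc, ih, Fin.val_last]
    ring

theorem twistedD_exponent_eq (m : ℕ) (k : Fin (m + 1) → ℕ) :
    ((m + 1 : ℕ) : ℤ) * ((k 0 : ℤ) + 1) + ∑ j : Fin (m + 1), 2 * ((j : ℕ) : ℤ) * ((k j : ℤ) + 1)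
      + ((m + 1) * (m + 1 - 1) : ℕ) =
      ((m + 1) * (2 * (m + 1) - 1) + ((m + 1) * k 0 + ∑ j : Fin m, 2 * ((j : ℕ) + 1) * k j.succ)
        : ℕ) := by
  have hgauss : ∑ j : Fin m, 2 * (((j : ℕ) : ℤ) + 1) = m * (m + 1) := by
    exact_mod_cast sum_fin_two_mul_succ m
  rw [show 2 * (m + 1) - 1 = 2 * m + 1 by omega, Nat.add_sub_cancel, Fin.sum_univ_succ]
  push_cast
  simp only [Fin.val_zero, Fin.val_succ, Nat.cast_zero, mul_zero, zero_mul, zero_add, Nat.cast_add,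
    Nat.cast_one, mul_add_one, sum_add_distrib] at hgauss ⊢
  linear_combination hgauss

theorem twistedD_term_eq (q t : ℝ) (m : ℕ) (k : Fin (m + 1) → ℕ) :
    (-1 : ℝ) ^ (k 0 + 1) * q ^ (-(((m + 1 : ℕ) : ℤ) * ((k 0 : ℤ) + 1)
      + (∑ j : Fin (m + 1), 2 * ((j : ℕ) : ℤ) * ((k j : ℤ) + 1)) + ((m + 1) * (m + 1 - 1) : ℕ))) * t =
      -(t * q⁻¹ ^ ((m + 1) * (2 * (m + 1) - 1)) * ∏ j, twistedDWeight q m j ^ k j) := by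
  rw [zpow_neg_eq_inv_pow (twistedD_exponent_eq m k), pow_add, prod_twistedDWeight_pow]
  ring

theorem twistedD_coeff_eq (q t : ℝ) (m N i : ℕ) :
    t ^ (i + 1) / (i + 1) * (q ^ (N * (i + 1)) *
      (1 - (-1 : ℝ) ^ (i + 1) * q ^ (-(((m + 1 : ℕ) : ℤ) * ((i : ℤ) + 1)))) *
        ∏ j : Fin m, (1 - q ^ (-(2 * (((j : ℕ) : ℤ) + 1) * ((i : ℤ) + 1)))))⁻¹ =
      (t * q⁻¹ ^ N) ^ (i + 1) / (i + 1) * ∏ j, (1 - twistedDWeight q m j ^ (i + 1))⁻¹ := by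
  have h0 : q ^ (-(((m + 1 : ℕ) : ℤ) * ((i : ℤ) + 1))) = q⁻¹ ^ ((m + 1) * (i + 1)) :=
    zpow_neg_eq_inv_pow (by push_cast; ring)
  have hj (j : Fin m) : q ^ (-(2 * (((j : ℕ) : ℤ) + 1) * ((i : ℤ) + 1))) =
      q⁻¹ ^ (2 * ((j : ℕ) + 1) * (i + 1)) :=
    zpow_neg_eq_inv_pow (by push_cast; ring)
  simp only [h0, hj]
  rw [prod_inv_distrib, prod_one_sub_twistedDWeight_pow, mul_assoc (q ^ _), mul_inv, mul_pow,
    ← pow_mul, inv_pow]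
  ring

/-- Zeta function of the classifying stack of the twisted Chevalley (Steinberg) group `²Dₙ`
(dimension `n(2n-1)`, degrees `n, 2, 4, …, 2n-2`, Frobenius eigenvalue `-q^{-n}` on the
degree-`n` generator, so `#B²Dₙ(𝔽_{qⁱ}) = (q^{n(2n-1)i}(1-(-1)ⁱq^{-ni})∏_{j=1}^{n-1}(1-q^{-2ji}))⁻¹`):
for real `q > 1` and `|t| < q^{n(2n-1)}`,
`ζ_{B²Dₙ}(t) = ∏_{k₁,…,kₙ ≥ 1} (1 + (-1)^{k₁} q^{-(nk₁+2k₂+⋯+(2n-2)kₙ+n(n-1))} t)⁻¹`.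
Tuples of positive integers `(k₁,…,kₙ)` are encoded as `k : Fin n → ℕ` via `kⱼ = k j + 1`,
with the coordinate `k ⟨0,_⟩` carrying degree `n` and the coordinate `k j` for `j ≠ 0`
carrying degree `2j`. -/
theorem zeta_B_2Dn (q : ℝ) (hq : 1 < q) (n : ℕ) (hn : 2 ≤ n) (t : ℝ)
    (ht : |t| < q ^ (n * (2 * n - 1))) :
    Multipliable (fun k : Fin n → ℕ =>
      (1 + (-1 : ℝ) ^ (k ⟨0, by omega⟩ + 1) *
        q ^ (-((n : ℤ) * ((k ⟨0, by omega⟩ : ℤ) + 1)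
          + (∑ j : Fin n, 2 * ((j : ℕ) : ℤ) * ((k j : ℤ) + 1)) + (n * (n - 1) : ℕ))) * t)⁻¹) ∧
    Real.exp (∑' i : ℕ, (t ^ (i + 1) / (i + 1)) *
        (q ^ (n * (2 * n - 1) * (i + 1)) *
          (1 - (-1 : ℝ) ^ (i + 1) * q ^ (-((n : ℤ) * ((i : ℤ) + 1)))) *
          ∏ j : Fin (n - 1), (1 - q ^ (-(2 * (((j : ℕ) : ℤ) + 1) * ((i : ℤ) + 1)))))⁻¹) =
      ∏' k : Fin n → ℕ,
        (1 + (-1 : ℝ) ^ (k ⟨0, by omega⟩ + 1) *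
          q ^ (-((n : ℤ) * ((k ⟨0, by omega⟩ : ℤ) + 1)
            + (∑ j : Fin n, 2 * ((j : ℕ) : ℤ) * ((k j : ℤ) + 1)) + (n * (n - 1) : ℕ))) * t)⁻¹ := by
  obtain ⟨m, rfl⟩ : ∃ m, n = m + 1 := ⟨n - 1, by omega⟩
  have ha : |t * q⁻¹ ^ ((m + 1) * (2 * (m + 1) - 1))| < 1 := by
    rw [abs_mul, abs_pow, abs_inv, abs_of_pos (zero_lt_one.trans hq), inv_pow, ← div_eq_mul_inv,
      div_lt_one (by positivity)]
    exact ht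
  obtain ⟨hmul, hexp⟩ :=
    Real.exp_tsum_pow_succ_div_mul_prod_eq_tprod ha (abs_twistedDWeight_lt_one hq)
  simp only [Fin.zero_eta, twistedD_term_eq, ← sub_eq_add_neg]
  refine ⟨hmul, Eq.trans ?_ hexp⟩
  exact congrArg Real.exp (tsum_congr fun i => twistedD_coeff_eq q t m _ i)
end
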